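/- Let N be a positive integer, δ > 0, and let μ be a finite complex measure on 𝕋 concentrated on A(N, δ). Then for every integer n and every sign ε ∈ {−1, +1}, |μ̂(n + εN) − μ̂(n)| ≤ ‖μ‖·π/N^δ, where ‖μ‖ is the total variation norm of μ. -/

import Mathlib

/-!
The character `x ↦ e^{iπεNx}` equals `1` on `(2/N)ℤ`, and characters `e^{iπmx}` of `ℝ/2ℤ` are
`π|m|`-Lipschitz, so on `A(N, δ)` it lies within `πN/(2N^{1+δ}) = π/(2N^δ)` of `1`. Hence
`|e^{iπ(n+εN)x} - e^{iπnx}| ≤ π/(2N^δ)` on a set carrying `μ`. Integrating against the four Jordan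
parts of `Re μ` and `Im μ` costs their total mass, which is at most `4‖μ‖`: by the Hahn
decomposition each Jordan part of a signed measure `s` has mass `|s(B)|` for some measurable `B`.
-/

open MeasureTheory Filter Metric Set

noncomputable section

instance : Fact ((0:ℝ) < 2) := ⟨two_pos⟩

/-- The circle `𝕋 = ℝ/2ℤ`. -/
abbrev Circle2 := AddCircle (2 : ℝ)

/-- Integral of `f` against a complex measure, defined via the Jordan decompositions of the
real and imaginary parts. -/
def cmIntegral (μ : ComplexMeasure Circle2) (f : Circle2 → ℂ) : ℂ :=
  ((∫ x, f x ∂μ.re.toJordanDecomposition.posPart) -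
      ∫ x, f x ∂μ.re.toJordanDecomposition.negPart) +
    Complex.I * ((∫ x, f x ∂μ.im.toJordanDecomposition.posPart) -
      ∫ x, f x ∂μ.im.toJordanDecomposition.negPart)

/-- The Fourier coefficient `μ̂(n) = (1/2) ∫_𝕋 e^{iπnx} dμ(x)`; here `fourier n x = exp (iπnx)`
on `AddCircle 2`. -/
def cmFourierCoeff (μ : ComplexMeasure Circle2) (n : ℤ) : ℂ :=
  (1 / 2 : ℂ) * cmIntegral μ (fun x => fourier n x)

/-- The support of the Fourier transform of `μ`. -/
def fourierSupport (μ : ComplexMeasure Circle2) : Set ℤ := {n | cmFourierCoeff μ n ≠ 0}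

/-- A positive measure with the same null sets as the total variation `|μ|`. -/
def cmVariation (μ : ComplexMeasure Circle2) : Measure Circle2 :=
  μ.re.totalVariation + μ.im.totalVariation

/-- `μ` is concentrated on `E`, i.e. `|μ|(𝕋 ∖ E) = 0`. -/
def ConcentratedOn (μ : ComplexMeasure Circle2) (E : Set Circle2) : Prop :=
  cmVariation μ Eᶜ = 0

/-- `Λ ⊆ ℤ` is a Rajchman set. -/
def IsRajchman (Λ : Set ℤ) : Prop :=
  ∀ μ : ComplexMeasure Circle2,
    Tendsto (cmFourierCoeff μ) (Filter.cofinite ⊓ Filter.principal Λᶜ) (nhds 0) →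
    Tendsto (cmFourierCoeff μ) (Filter.cofinite ⊓ Filter.principal Λ) (nhds 0)

/-- `Λ ⊆ ℤ` is a Riesz set. -/
def IsRiesz (Λ : Set ℤ) : Prop :=
  ∀ μ : ComplexMeasure Circle2, fourierSupport μ ⊆ Λ →
    μ ≪ᵥ (volume : Measure Circle2).toENNRealVectorMeasure

/-- `E ⊆ 𝕋` is a parisian set. -/
def IsParisian (E : Set Circle2) : Prop :=
  ∀ μ : ComplexMeasure Circle2, ConcentratedOn μ E →
    ¬ μ ≪ᵥ (volume : Measure Circle2).toENNRealVectorMeasure →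
    ¬ IsRajchman (fourierSupport μ)

/-- `Ω((n_j)) = {∑ ε_j n_j : ε_j ∈ {-1,0,1}, finitely many nonzero}`. -/
def Omega (n : ℕ → ℤ) : Set ℤ :=
  {k | ∃ (F : Finset ℕ) (ε : ℕ → ℤ),
    (∀ j, ε j = -1 ∨ ε j = 0 ∨ ε j = 1) ∧ k = ∑ j ∈ F, ε j * n j}

/-- The image of `(2/N)ℤ` in `𝕋`. -/
def grid (N : ℕ) : Set Circle2 := Set.range fun k : ℤ => ((2 * k / N : ℝ) : Circle2)

/-- `A(N,δ)`: the points of `𝕋` within distance `1/(2N^{1+δ})` of `(2/N)ℤ`. -/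
def nbhdGrid (N : ℕ) (δ : ℝ) : Set Circle2 :=
  {x | Metric.infDist x (grid N) ≤ 1 / (2 * (N : ℝ) ^ ((1 : ℝ) + δ))}

/-- `Ẽ = {x ∈ 𝕋 : sup_j N_j^{1+δ}·dist(x, (2/N_j)ℤ) < ∞}`. -/
def Etilde (N : ℕ → ℕ) (δ : ℝ) : Set Circle2 :=
  {x | ∃ C : ℝ, ∀ j, (N j : ℝ) ^ ((1 : ℝ) + δ) * Metric.infDist x (grid (N j)) ≤ C}

/-- The total variation norm `‖μ‖` of a complex measure, as the supremum of
`∑ |μ(B i)|` over finite disjoint families of measurable sets. -/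
def cmNorm (μ : ComplexMeasure Circle2) : ℝ :=
  sSup {r : ℝ | ∃ (n : ℕ) (B : Fin n → Set Circle2), (∀ i, MeasurableSet (B i)) ∧
    (∀ i j, i ≠ j → Disjoint (B i) (B j)) ∧ r = ∑ i, ‖μ (B i)‖}

/-- Fourier coefficient of a positive measure. -/
def posFourierCoeff (μ : Measure Circle2) (n : ℤ) : ℂ :=
  (1 / 2 : ℂ) * ∫ x, fourier n x ∂μ

open Real

namespace AddCircle

variable {T : ℝ}

theorem exists_coe_eq_and_abs_eq_norm (x : AddCircle T) :
    ∃ t : ℝ, (t : AddCircle T) = x ∧ |t| = ‖x‖ := by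
  induction x using QuotientAddGroup.induction_on with | H t => ?_
  refine ⟨t - round (T⁻¹ * t) * T, ?_, (AddCircle.norm_eq (p := T)).symm⟩
  simp [coe_period]

theorem fourier_apply_add (m : ℤ) (x y : AddCircle T) :
    fourier m (x + y) = fourier m x * fourier m y := by
  simp only [fourier_apply, smul_add, toCircle_add, Circle.coe_mul]

theorem norm_fourier_sub_one_le [Fact (0 < T)] (m : ℤ) (x : AddCircle T) :
    ‖fourier m x - 1‖ ≤ 2 * π * |(m : ℝ)| / T * ‖x‖ := by
  obtain ⟨t, rfl, ht⟩ := exists_coe_eq_and_abs_eq_norm x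
  have hT : 0 < T := Fact.out
  calc ‖fourier m (t : AddCircle T) - 1‖
      = ‖Complex.exp (Complex.I * ↑(2 * π * m * t / T)) - 1‖ := by
        rw [fourier_coe_apply]; push_cast; ring_nf
    _ ≤ ‖2 * π * m * t / T‖ := Real.norm_exp_I_mul_ofReal_sub_one_le
    _ = 2 * π * |(m : ℝ)| / T * ‖(t : AddCircle T)‖ := by
        rw [← ht, Real.norm_eq_abs, abs_div, abs_mul, abs_mul, abs_of_pos hT,
          abs_of_pos two_pi_pos]
        ring

theorem norm_fourier_sub_fourier_le [Fact (0 < T)] (m : ℤ) (x y : AddCircle T) :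
    ‖fourier m x - fourier m y‖ ≤ 2 * π * |(m : ℝ)| / T * dist x y := by
  have hsplit : fourier m x = fourier m (x - y) * fourier m y := by
    rw [← fourier_apply_add, sub_add_cancel]
  rw [hsplit, ← sub_one_mul, norm_mul, fourier_apply (x := y), Circle.norm_coe, mul_one,
    dist_eq_norm]
  exact norm_fourier_sub_one_le m (x - y)

end AddCircle

theorem Metric.le_mul_infDist {α : Type*} [PseudoMetricSpace α] {x : α} {s : Set α}
    {a K : ℝ} (hK : 0 ≤ K) (hs : s.Nonempty) (h : ∀ y ∈ s, a ≤ K * dist x y) :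
    a ≤ K * infDist x s := by
  have := hs.to_subtype
  rw [infDist_eq_iInf, Real.mul_iInf_of_nonneg hK]
  exact le_ciInf fun y => h y y.2

theorem fourier_mul_eq_one_of_mem_grid {N : ℕ} (k : ℤ) {y : Circle2} (hy : y ∈ grid N) :
    fourier (k * N) y = 1 := by
  obtain ⟨j, rfl⟩ := hy
  rcases eq_or_ne N 0 with rfl | hN
  · simp
  rw [fourier_coe_apply, ← Complex.exp_int_mul_two_pi_mul_I (k * j)]
  congr 1
  push_cast
  field_simp

theorem norm_fourier_mul_sub_one_le_infDist (N : ℕ) (k : ℤ) (x : Circle2) :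
    ‖fourier (k * N) x - 1‖ ≤ π * |(k : ℝ)| * N * infDist x (grid N) := by
  refine Metric.le_mul_infDist (by positivity) ⟨_, 0, rfl⟩ fun y hy => ?_
  calc ‖fourier (k * N) x - 1‖ = ‖fourier (k * N) x - fourier (k * N) y‖ := by
        rw [fourier_mul_eq_one_of_mem_grid k hy]
    _ ≤ 2 * π * |((k * N : ℤ) : ℝ)| / 2 * dist x y := AddCircle.norm_fourier_sub_fourier_le _ _ _
    _ = π * |(k : ℝ)| * N * dist x y := by
        push_cast
        rw [abs_mul, Nat.abs_cast]
        ring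

theorem norm_fourier_add_sub_fourier_le {N : ℕ} (hN : 0 < N) {δ : ℝ} (n k : ℤ) {x : Circle2}
    (hx : x ∈ nbhdGrid N δ) :
    ‖fourier (n + k * N) x - fourier n x‖ ≤ π * |(k : ℝ)| / (2 * (N : ℝ) ^ δ) := by
  have hNpos : (0 : ℝ) < N := Nat.cast_pos.mpr hN
  calc ‖fourier (n + k * N) x - fourier n x‖ = ‖fourier (k * N) x - 1‖ := by
        rw [fourier_add, ← mul_sub_one, norm_mul, fourier_apply (x := x), Circle.norm_coe, one_mul]
    _ ≤ π * |(k : ℝ)| * N * (1 / (2 * (N : ℝ) ^ ((1 : ℝ) + δ))) :=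
        (norm_fourier_mul_sub_one_le_infDist N k x).trans (by gcongr; exact hx)
    _ = π * |(k : ℝ)| / (2 * (N : ℝ) ^ δ) := by
        rw [Real.rpow_add hNpos, Real.rpow_one]
        field_simp

namespace MeasureTheory.SignedMeasure

variable {α : Type*} [MeasurableSpace α] (s : SignedMeasure α)

theorem totalVariation_real_univ_le {M : ℝ} (h : ∀ B, MeasurableSet B → |s B| ≤ M) :
    s.totalVariation.real univ ≤ 2 * M := by
  obtain ⟨S, hSm, hposS, hnegSc⟩ := s.toJordanDecomposition.mutuallySingular
  set P := s.toJordanDecomposition.posPart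
  set Q := s.toJordanDecomposition.negPart
  have hPS : P.real S = 0 := by simp [measureReal_def, hposS]
  have hQSc : Q.real Sᶜ = 0 := by simp [measureReal_def, hnegSc]
  have hS := s.apply_eq_posPart_real_sub_negPart_real hSm
  have hSc := s.apply_eq_posPart_real_sub_negPart_real hSm.compl
  have hP := measureReal_add_measureReal_compl (μ := P) hSm
  have hQ := measureReal_add_measureReal_compl (μ := Q) hSm
  rw [totalVariation, measureReal_add_apply]
  linarith [le_abs_self (s Sᶜ), neg_le_abs (s S), h _ hSm, h _ hSm.compl]

theorem norm_integral_posPart_sub_integral_negPart_le {E : Type*} [NormedAddCommGroup E]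
    [NormedSpace ℝ E] {f : α → E} {C : ℝ} (hf : ∀ᵐ x ∂s.totalVariation, ‖f x‖ ≤ C) :
    ‖∫ x, f x ∂s.toJordanDecomposition.posPart - ∫ x, f x ∂s.toJordanDecomposition.negPart‖ ≤
      C * s.totalVariation.real univ := by
  have hpos := norm_integral_le_of_norm_le_const
    (Measure.absolutelyContinuous_of_le (Measure.le_add_right le_rfl) hf)
  have hneg := norm_integral_le_of_norm_le_const
    (Measure.absolutelyContinuous_of_le (Measure.le_add_left le_rfl) hf)
  rw [totalVariation, measureReal_add_apply, mul_add]
  exact (norm_sub_le _ _).trans (add_le_add hpos hneg)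

end MeasureTheory.SignedMeasure

section ComplexMeasure

variable (μ : ComplexMeasure Circle2)

instance : IsFiniteMeasure (cmVariation μ) := by
  unfold cmVariation SignedMeasure.totalVariation
  infer_instance

theorem norm_apply_le_cmVariation {B : Set Circle2} : ‖μ B‖ ≤ (cmVariation μ).real B :=
  calc ‖μ B‖ ≤ |μ.re B| + |μ.im B| := Complex.norm_le_abs_re_add_abs_im _
    _ ≤ μ.re.totalVariation.real B + μ.im.totalVariation.real B :=
        add_le_add (μ.re.norm_le_totalVariation B) (μ.im.norm_le_totalVariation B)
    _ = (cmVariation μ).real B := (measureReal_add_apply ..).symm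

theorem norm_apply_le_cmNorm {B : Set Circle2} (hB : MeasurableSet B) : ‖μ B‖ ≤ cmNorm μ := by
  refine le_csSup ⟨(cmVariation μ).real univ, ?_⟩
    ⟨1, fun _ => B, fun _ => hB, fun i j hij => (hij (Subsingleton.elim i j)).elim, by simp⟩
  rintro r ⟨n, F, hF, hdisj, rfl⟩
  calc ∑ i, ‖μ (F i)‖ ≤ ∑ i, (cmVariation μ).real (F i) :=
        Finset.sum_le_sum fun i _ => norm_apply_le_cmVariation μ
    _ = (cmVariation μ).real (⋃ i, F i) :=
        (measureReal_iUnion_fintype (fun i j hij => hdisj i j hij) hF).symm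
    _ ≤ (cmVariation μ).real univ := measureReal_mono (subset_univ _)

theorem cmVariation_real_univ_le : (cmVariation μ).real univ ≤ 4 * cmNorm μ := by
  have hre := μ.re.totalVariation_real_univ_le fun B hB =>
    (Complex.abs_re_le_norm (μ B)).trans (norm_apply_le_cmNorm μ hB)
  have him := μ.im.totalVariation_real_univ_le fun B hB =>
    (Complex.abs_im_le_norm (μ B)).trans (norm_apply_le_cmNorm μ hB)
  rw [cmVariation, measureReal_add_apply]
  linarith

theorem norm_cmIntegral_le {f : Circle2 → ℂ} {C : ℝ} (hf : ∀ᵐ x ∂cmVariation μ, ‖f x‖ ≤ C) :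
    ‖cmIntegral μ f‖ ≤ C * (cmVariation μ).real univ := by
  have hre := μ.re.norm_integral_posPart_sub_integral_negPart_le
    (Measure.absolutelyContinuous_of_le (Measure.le_add_right le_rfl) hf)
  have him := μ.im.norm_integral_posPart_sub_integral_negPart_le
    (Measure.absolutelyContinuous_of_le (Measure.le_add_left le_rfl) hf)
  rw [cmIntegral, cmVariation, measureReal_add_apply, mul_add]
  refine (norm_add_le _ _).trans (add_le_add hre ?_)
  rwa [norm_mul, Complex.norm_I, one_mul]

theorem cmIntegral_sub {f g : Circle2 → ℂ} (hf : Continuous f) (hg : Continuous g) :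
    cmIntegral μ (fun x => f x - g x) = cmIntegral μ f - cmIntegral μ g := by
  have hfi (ν : Measure Circle2) [IsFiniteMeasure ν] : Integrable f ν :=
    hf.integrable_of_hasCompactSupport (HasCompactSupport.of_compactSpace f)
  have hgi (ν : Measure Circle2) [IsFiniteMeasure ν] : Integrable g ν :=
    hg.integrable_of_hasCompactSupport (HasCompactSupport.of_compactSpace g)
  simp only [cmIntegral, integral_sub (hfi _) (hgi _)]
  ring

theorem cmFourierCoeff_sub (m n : ℤ) :
    cmFourierCoeff μ m - cmFourierCoeff μ n =
      1 / 2 * cmIntegral μ (fun x => fourier m x - fourier n x) := by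
  rw [cmFourierCoeff, cmFourierCoeff, cmIntegral_sub μ (map_continuous _) (map_continuous _),
    mul_sub]

theorem ConcentratedOn.ae_mem {μ : ComplexMeasure Circle2} {E : Set Circle2}
    (h : ConcentratedOn μ E) : ∀ᵐ x ∂cmVariation μ, x ∈ E :=
  compl_compl E ▸ measure_eq_zero_iff_ae_notMem.mp h

end ComplexMeasure

theorem abs_fourierCoeff_shift_sub_le_general (N : ℕ) (hN : 0 < N) (δ : ℝ)
    (μ : ComplexMeasure Circle2) (hconc : ConcentratedOn μ (nbhdGrid N δ))
    (n : ℤ) (ε : ℤ) (hε : ε = 1 ∨ ε = -1) :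
    ‖cmFourierCoeff μ (n + ε * N) - cmFourierCoeff μ n‖ ≤
      cmNorm μ * Real.pi / (N : ℝ) ^ δ := by
  have habs : |(ε : ℝ)| = 1 := by rcases hε with rfl | rfl <;> simp
  have hbound : ∀ᵐ x ∂cmVariation μ,
      ‖fourier (n + ε * N) x - fourier n x‖ ≤ π / (2 * (N : ℝ) ^ δ) :=
    hconc.ae_mem.mono fun x hx => by
      simpa [habs] using norm_fourier_add_sub_fourier_le hN n ε hx
  rw [cmFourierCoeff_sub, norm_mul]
  calc ‖(1 / 2 : ℂ)‖ * ‖cmIntegral μ fun x => fourier (n + ε * N) x - fourier n x‖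
      ≤ 1 / 2 * (π / (2 * (N : ℝ) ^ δ) * (4 * cmNorm μ)) := by
        rw [show ‖(1 / 2 : ℂ)‖ = 1 / 2 by norm_num]
        gcongr
        exact (norm_cmIntegral_le μ hbound).trans (by gcongr; exact cmVariation_real_univ_le μ)
    _ = cmNorm μ * π / (N : ℝ) ^ δ := by ring

/-- If `μ` is concentrated on `A(N, δ)`, then for every `n` and sign `ε = ±1`,
`|μ̂(n + εN) - μ̂(n)| ≤ ‖μ‖·π/N^δ`. -/
theorem abs_fourierCoeff_shift_sub_le (N : ℕ) (hN : 0 < N) (δ : ℝ) (hδ : 0 < δ)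
    (μ : ComplexMeasure Circle2) (hconc : ConcentratedOn μ (nbhdGrid N δ))
    (n : ℤ) (ε : ℤ) (hε : ε = 1 ∨ ε = -1) :
    ‖cmFourierCoeff μ (n + ε * N) - cmFourierCoeff μ n‖ ≤
      cmNorm μ * Real.pi / (N : ℝ) ^ δ :=
  abs_fourierCoeff_shift_sub_le_general N hN δ μ hconc n ε hε

end
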